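/- arXiv:1906.08386 — 2 statements merged into one kernel-verified Lean document; each statement's English description precedes it below -/
import Mathlib

section
/- Let μ₀ and μ₁ be probability measures on a measurable space Ω (the group-conditional data distributions), let Y : Ω → ℝ be a measurable label taking values in {0,1}, and let Ŷ : Ω → ℝ be a measurable predictor taking values in {0,1}. If Ŷ satisfies demographic parity, i.e., μ₀{Ŷ = 1} = μ₁{Ŷ = 1}, then max{err₀(Ŷ), err₁(Ŷ)} ≥ |μ₀{Y = 1} − μ₁{Y = 1}| / 2. -/
/-!
A `{0,1}`-valued function is the indicator of the set where it equals `1`, so its integral is the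
measure of that set, and `|μ{Y = 1} - μ{Ŷ = 1}| = |∫ (Y - Ŷ) ∂μ| ≤ err(Ŷ)` for each group.
Demographic parity makes `p = μ₀{Ŷ = 1} = μ₁{Ŷ = 1}` common to both groups, and the triangle
inequality through `p` bounds the base-rate gap by `err₀(Ŷ) + err₁(Ŷ) ≤ 2 max(err₀(Ŷ), err₁(Ŷ))`.
-/

open MeasureTheory

lemma abs_sub_div_two_le_max_abs_sub (a b p : ℝ) : |a - b| / 2 ≤ max |a - p| |b - p| := by
  have htri := abs_sub_le a p b
  rw [abs_sub_comm p b] at htri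
  linarith [le_max_left |a - p| |b - p|, le_max_right |a - p| |b - p|]

lemma eq_indicator_one_of_zero_or_one {Ω : Type*} {f : Ω → ℝ} (hf : ∀ ω, f ω = 0 ∨ f ω = 1) :
    f = {ω | f ω = 1}.indicator 1 := by
  funext ω
  rcases hf ω with h | h <;> simp [h]

section ZeroOneValued

variable {Ω : Type*} [MeasurableSpace Ω] {μ : Measure Ω} {f g : Ω → ℝ}

lemma integral_eq_measureReal_of_zero_or_one (hfm : Measurable f)
    (hf : ∀ ω, f ω = 0 ∨ f ω = 1) : ∫ ω, f ω ∂μ = μ.real {ω | f ω = 1} := by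
  conv_lhs => rw [eq_indicator_one_of_zero_or_one hf]
  exact integral_indicator_one (hfm (measurableSet_singleton 1))

lemma integrable_of_zero_or_one [IsFiniteMeasure μ] (hfm : Measurable f)
    (hf : ∀ ω, f ω = 0 ∨ f ω = 1) : Integrable f μ := by
  rw [eq_indicator_one_of_zero_or_one hf]
  exact (integrable_const 1).indicator (hfm (measurableSet_singleton 1))

lemma abs_measureReal_sub_le_integral_abs_sub_of_zero_or_one [IsFiniteMeasure μ]
    (hfm : Measurable f) (hgm : Measurable g)
    (hf : ∀ ω, f ω = 0 ∨ f ω = 1) (hg : ∀ ω, g ω = 0 ∨ g ω = 1) :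
    |μ.real {ω | f ω = 1} - μ.real {ω | g ω = 1}| ≤ ∫ ω, |f ω - g ω| ∂μ := by
  rw [← integral_eq_measureReal_of_zero_or_one hfm hf,
    ← integral_eq_measureReal_of_zero_or_one hgm hg,
    ← integral_sub (integrable_of_zero_or_one hfm hf) (integrable_of_zero_or_one hgm hg)]
  exact abs_integral_le_integral_abs

end ZeroOneValued

/-- **Corollary 3.2.** If the predictor `Yhat` satisfies demographic parity, then at
least one of the two groups incurs error at least half of the base-rate gap. -/
theorem fairness_max_error_lower_bound_demographic_parity
    {Ω : Type*} [MeasurableSpace Ω]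
    (μ₀ μ₁ : Measure Ω) [IsProbabilityMeasure μ₀] [IsProbabilityMeasure μ₁]
    (Y Yhat : Ω → ℝ) (hY : Measurable Y) (hYhat : Measurable Yhat)
    (hY01 : ∀ ω, Y ω = 0 ∨ Y ω = 1) (hYhat01 : ∀ ω, Yhat ω = 0 ∨ Yhat ω = 1)
    (hDP : μ₀ {ω | Yhat ω = 1} = μ₁ {ω | Yhat ω = 1}) :
    max (∫ ω, |Y ω - Yhat ω| ∂μ₀) (∫ ω, |Y ω - Yhat ω| ∂μ₁) ≥
      |(μ₀ {ω | Y ω = 1}).toReal - (μ₁ {ω | Y ω = 1}).toReal| / 2 := by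
  have err₀ := abs_measureReal_sub_le_integral_abs_sub_of_zero_or_one (μ := μ₀)
    hY hYhat hY01 hYhat01
  have err₁ := abs_measureReal_sub_le_integral_abs_sub_of_zero_or_one (μ := μ₁)
    hY hYhat hY01 hYhat01
  rw [measureReal_def, measureReal_def μ₀, hDP, ← measureReal_def] at err₀
  calc |(μ₀ {ω | Y ω = 1}).toReal - (μ₁ {ω | Y ω = 1}).toReal| / 2
      ≤ max |μ₀.real {ω | Y ω = 1} - μ₁.real {ω | Yhat ω = 1}|
          |μ₁.real {ω | Y ω = 1} - μ₁.real {ω | Yhat ω = 1}| :=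
        abs_sub_div_two_le_max_abs_sub _ _ _
    _ ≤ _ := max_le_max err₀ err₁
end

section
/- (Lin's lemma) For any two probability measures P and Q on the same measurable space, JSD(P, Q) ≤ dTV(P, Q); equivalently, d_JS(P, Q)² ≤ dTV(P, Q). -/
open MeasureTheory
open scoped ENNReal

/-- Total variation distance between two measures:
the supremum over measurable sets of the absolute difference of the probabilities. -/
noncomputable def dTV {Ω : Type*} [MeasurableSpace Ω] (P Q : Measure Ω) : ℝ :=
  ⨆ E : {E : Set Ω // MeasurableSet E}, |(P E.1).toReal - (Q E.1).toReal|

/-- Kullback–Leibler divergence `KL(P ‖ Q) = ∫ log (dP/dQ) dP`. -/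
noncomputable def klDiv {Ω : Type*} [MeasurableSpace Ω] (P Q : Measure Ω) : ℝ :=
  ∫ ω, Real.log ((P.rnDeriv Q ω).toReal) ∂P

/-- Jensen–Shannon divergence
`JSD(P, Q) = (1/2) KL(P ‖ M) + (1/2) KL(Q ‖ M)` where `M = (P + Q)/2`. -/
noncomputable def JSD {Ω : Type*} [MeasurableSpace Ω] (P Q : Measure Ω) : ℝ :=
  (klDiv P ((2 : ℝ≥0∞)⁻¹ • (P + Q)) + klDiv Q ((2 : ℝ≥0∞)⁻¹ • (P + Q))) / 2

/-- Jensen–Shannon distance `d_JS(P, Q) = √JSD(P, Q)`. -/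
noncomputable def dJS {Ω : Type*} [MeasurableSpace Ω] (P Q : Measure Ω) : ℝ :=
  Real.sqrt (JSD P Q)

/-! With `M = (P + Q) / 2`, the densities `p = dP/dM` and `q = dQ/dM` satisfy `p + q = 2`, and
`2 JSD(P, Q) = ∫ (p log p + q log q) dM`. Pointwise, `p log p + q log q ≤ (p - q)² / 2 ≤ |p - q|`,
while `∫ |p - q| dM = 2 (P E - Q E) ≤ 2 dTV(P, Q)` for the set `E = {q ≤ p}`. -/

open Real

namespace Real

lemma mul_log_le_mul_sub_one {x : ℝ} (hx : 0 ≤ x) : x * log x ≤ x * (x - 1) := by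
  rcases hx.eq_or_lt with rfl | hx
  · simp
  · exact mul_le_mul_of_nonneg_left (log_le_sub_one_of_pos hx) hx.le

lemma abs_mul_log_le_two {x : ℝ} (h0 : 0 ≤ x) (h2 : x ≤ 2) : |x * log x| ≤ 2 :=
  abs_le.2 ⟨by linarith [self_sub_one_le_mul_log h0], by nlinarith [mul_log_le_mul_sub_one h0]⟩

/-- Pointwise form of Lin's lemma: by `t log t ≤ t (t - 1)` the left side is at most
`(x - y)² / 2`, and `|x - y| ≤ 2`. -/
lemma mul_log_add_mul_log_le_abs_sub {x y : ℝ} (hx : 0 ≤ x) (hy : 0 ≤ y) (hxy : x + y = 2) :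
    x * log x + y * log y ≤ |x - y| := by
  have h_sq : x * (x - 1) + y * (y - 1) = (x - y) ^ 2 / 2 := by
    linear_combination (x + y) / 2 * hxy
  have h_abs : |x - y| ≤ 2 := abs_le.2 ⟨by linarith, by linarith⟩
  nlinarith [mul_log_le_mul_sub_one hx, mul_log_le_mul_sub_one hy, sq_abs (x - y),
    abs_nonneg (x - y)]

end Real

section TotalVariation

variable {Ω : Type*} [MeasurableSpace Ω]

lemma bddAbove_range_abs_sub_measureReal (P Q : Measure Ω) [IsFiniteMeasure P]
    [IsFiniteMeasure Q] :
    BddAbove (Set.range fun E : {E : Set Ω // MeasurableSet E} ↦ |P.real E.1 - Q.real E.1|) := by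
  refine ⟨P.real Set.univ + Q.real Set.univ, ?_⟩
  rintro _ ⟨E, rfl⟩
  calc |P.real E.1 - Q.real E.1| ≤ |P.real E.1| + |Q.real E.1| := abs_sub _ _
    _ = P.real E.1 + Q.real E.1 := by rw [abs_of_nonneg measureReal_nonneg,
        abs_of_nonneg measureReal_nonneg]
    _ ≤ P.real Set.univ + Q.real Set.univ :=
        add_le_add (measureReal_mono (Set.subset_univ _)) (measureReal_mono (Set.subset_univ _))

lemma abs_sub_le_dTV (P Q : Measure Ω) [IsFiniteMeasure P] [IsFiniteMeasure Q] {E : Set Ω}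
    (hE : MeasurableSet E) : |P.real E - Q.real E| ≤ dTV P Q :=
  le_ciSup (bddAbove_range_abs_sub_measureReal P Q) ⟨E, hE⟩

lemma dTV_nonneg (P Q : Measure Ω) [IsFiniteMeasure P] [IsFiniteMeasure Q] : 0 ≤ dTV P Q :=
  (abs_nonneg _).trans (abs_sub_le_dTV P Q MeasurableSet.empty)

lemma integral_abs_sub_eq_two_mul_setIntegral_sub {μ : Measure Ω} {f g : Ω → ℝ}
    (hf : Integrable f μ) (hg : Integrable g μ) (hfg : ∫ x, f x ∂μ = ∫ x, g x ∂μ) :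
    ∫ x, |f x - g x| ∂μ = 2 * ∫ x in {x | g x ≤ f x}, (f x - g x) ∂μ := by
  set E := {x | g x ≤ f x}
  have hE : NullMeasurableSet E μ := nullMeasurableSet_le hg.aemeasurable hf.aemeasurable
  have hfg_int : Integrable (fun x ↦ f x - g x) μ := hf.sub hg
  have h_split : ∫ x in E, (f x - g x) ∂μ + ∫ x in Eᶜ, (f x - g x) ∂μ = 0 := by
    rw [integral_add_compl₀ hE hfg_int, integral_sub hf hg, hfg, sub_self]
  have h_pos : ∫ x in E, |f x - g x| ∂μ = ∫ x in E, (f x - g x) ∂μ :=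
    setIntegral_congr_fun₀ hE fun x hx ↦ abs_of_nonneg (sub_nonneg.2 hx)
  have h_neg : ∫ x in Eᶜ, |f x - g x| ∂μ = -∫ x in Eᶜ, (f x - g x) ∂μ := by
    rw [← integral_neg]
    exact setIntegral_congr_fun₀ hE.compl fun x hx ↦
      abs_of_neg (sub_neg.2 (lt_of_not_ge hx))
  rw [← integral_add_compl₀ hE hfg_int.abs, h_pos, h_neg]
  linarith

lemma integral_abs_sub_toReal_rnDeriv_le_two_mul_dTV (P Q : Measure Ω) [IsProbabilityMeasure P]
    [IsProbabilityMeasure Q] {μ : Measure Ω} [SigmaFinite μ] (hPμ : P ≪ μ) (hQμ : Q ≪ μ) :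
    ∫ ω, |(P.rnDeriv μ ω).toReal - (Q.rnDeriv μ ω).toReal| ∂μ ≤ 2 * dTV P Q := by
  have hp : Integrable (fun ω ↦ (P.rnDeriv μ ω).toReal) μ := Measure.integrable_toReal_rnDeriv
  have hq : Integrable (fun ω ↦ (Q.rnDeriv μ ω).toReal) μ := Measure.integrable_toReal_rnDeriv
  have hE : MeasurableSet {ω | (Q.rnDeriv μ ω).toReal ≤ (P.rnDeriv μ ω).toReal} :=
    measurableSet_le (Measure.measurable_rnDeriv Q μ).ennreal_toReal
      (Measure.measurable_rnDeriv P μ).ennreal_toReal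
  rw [integral_abs_sub_eq_two_mul_setIntegral_sub hp hq (by
      rw [Measure.integral_toReal_rnDeriv hPμ, Measure.integral_toReal_rnDeriv hQμ]; simp),
    integral_sub hp.integrableOn hq.integrableOn, Measure.setIntegral_toReal_rnDeriv hPμ,
    Measure.setIntegral_toReal_rnDeriv hQμ]
  gcongr
  exact (le_abs_self _).trans (abs_sub_le_dTV P Q hE)

end TotalVariation

section Mixture

variable {Ω : Type*} [MeasurableSpace Ω]

lemma klDiv_eq_integral_toReal_rnDeriv_mul_log {P μ : Measure Ω} [SigmaFinite P]
    [P.HaveLebesgueDecomposition μ] (hPμ : P ≪ μ) :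
    klDiv P μ = ∫ ω, (P.rnDeriv μ ω).toReal * log (P.rnDeriv μ ω).toReal ∂μ :=
  (integral_rnDeriv_mul_log hPμ).symm

lemma integrable_mul_log_of_nonneg_of_le_two {μ : Measure Ω} [IsFiniteMeasure μ] {f : Ω → ℝ}
    (hf : AEStronglyMeasurable f μ) (h0 : ∀ᵐ x ∂μ, 0 ≤ f x) (h2 : ∀ᵐ x ∂μ, f x ≤ 2) :
    Integrable (fun x ↦ f x * log (f x)) μ :=
  Integrable.mono' (integrable_const 2) (continuous_mul_log.comp_aestronglyMeasurable hf)
    (by filter_upwards [h0, h2] with x hx0 hx2 using abs_mul_log_le_two hx0 hx2)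

variable (P Q : Measure Ω)

instance isFiniteMeasure_inv_two_smul_add [IsFiniteMeasure P] [IsFiniteMeasure Q] :
    IsFiniteMeasure ((2 : ℝ≥0∞)⁻¹ • (P + Q)) :=
  (P + Q).smul_finite (by simp)

lemma absolutelyContinuous_inv_two_smul_add_left : P ≪ (2 : ℝ≥0∞)⁻¹ • (P + Q) :=
  (Measure.absolutelyContinuous_of_le (Measure.le_add_right le_rfl)).trans
    (Measure.absolutelyContinuous_smul (by norm_num))

lemma absolutelyContinuous_inv_two_smul_add_right : Q ≪ (2 : ℝ≥0∞)⁻¹ • (P + Q) :=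
  (Measure.absolutelyContinuous_of_le (Measure.le_add_left le_rfl)).trans
    (Measure.absolutelyContinuous_smul (by norm_num))

variable [IsFiniteMeasure P] [IsFiniteMeasure Q]

lemma toReal_rnDeriv_add_toReal_rnDeriv_inv_two_smul_add :
    ∀ᵐ ω ∂(2 : ℝ≥0∞)⁻¹ • (P + Q), (P.rnDeriv ((2 : ℝ≥0∞)⁻¹ • (P + Q)) ω).toReal
      + (Q.rnDeriv ((2 : ℝ≥0∞)⁻¹ • (P + Q)) ω).toReal = 2 := by
  set M := (2 : ℝ≥0∞)⁻¹ • (P + Q)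
  have hPQ : P + Q = (2 : ℝ≥0∞) • M := by
    rw [smul_smul, ENNReal.mul_inv_cancel two_ne_zero ENNReal.ofNat_ne_top, one_smul]
  have h_add : (P + Q).rnDeriv M =ᵐ[M] P.rnDeriv M + Q.rnDeriv M := Measure.rnDeriv_add P Q M
  rw [hPQ] at h_add
  filter_upwards [h_add, Measure.rnDeriv_smul_left_of_ne_top M M (r := 2) ENNReal.ofNat_ne_top,
    Measure.rnDeriv_self M, Measure.rnDeriv_ne_top P M, Measure.rnDeriv_ne_top Q M]
    with ω h_add h_smul h_self hP hQ
  rw [← ENNReal.toReal_add hP hQ, ← Pi.add_apply, ← h_add, h_smul]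
  simp [h_self]

lemma JSD_le_half_integral_abs_sub_toReal_rnDeriv :
    JSD P Q ≤ (∫ ω, |(P.rnDeriv ((2 : ℝ≥0∞)⁻¹ • (P + Q)) ω).toReal
      - (Q.rnDeriv ((2 : ℝ≥0∞)⁻¹ • (P + Q)) ω).toReal| ∂(2 : ℝ≥0∞)⁻¹ • (P + Q)) / 2 := by
  set M := (2 : ℝ≥0∞)⁻¹ • (P + Q)
  set p := fun ω ↦ (P.rnDeriv M ω).toReal
  set q := fun ω ↦ (Q.rnDeriv M ω).toReal
  have h_sum : ∀ᵐ ω ∂M, p ω + q ω = 2 := toReal_rnDeriv_add_toReal_rnDeriv_inv_two_smul_add P Q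
  have hp : Integrable (fun ω ↦ p ω * log (p ω)) M :=
    integrable_mul_log_of_nonneg_of_le_two
      (Measure.measurable_rnDeriv P M).ennreal_toReal.aestronglyMeasurable
      (ae_of_all _ fun _ ↦ ENNReal.toReal_nonneg)
      (by filter_upwards [h_sum] with ω h using by linarith [(Q.rnDeriv M ω).toReal_nonneg])
  have hq : Integrable (fun ω ↦ q ω * log (q ω)) M :=
    integrable_mul_log_of_nonneg_of_le_two
      (Measure.measurable_rnDeriv Q M).ennreal_toReal.aestronglyMeasurable
      (ae_of_all _ fun _ ↦ ENNReal.toReal_nonneg)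
      (by filter_upwards [h_sum] with ω h using by linarith [(P.rnDeriv M ω).toReal_nonneg])
  have hpq : Integrable (fun ω ↦ p ω - q ω) M :=
    Measure.integrable_toReal_rnDeriv.sub Measure.integrable_toReal_rnDeriv
  calc JSD P Q = (∫ ω, (p ω * log (p ω) + q ω * log (q ω)) ∂M) / 2 := by
        rw [JSD, klDiv_eq_integral_toReal_rnDeriv_mul_log
          (absolutelyContinuous_inv_two_smul_add_left P Q),
          klDiv_eq_integral_toReal_rnDeriv_mul_log
          (absolutelyContinuous_inv_two_smul_add_right P Q), integral_add hp hq]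
    _ ≤ (∫ ω, |p ω - q ω| ∂M) / 2 := by
      refine div_le_div_of_nonneg_right (integral_mono_ae (hp.add hq) hpq.abs ?_) zero_le_two
      filter_upwards [h_sum] with ω h
      exact mul_log_add_mul_log_le_abs_sub ENNReal.toReal_nonneg ENNReal.toReal_nonneg h

end Mixture

/-- **Lin's lemma**: the Jensen–Shannon divergence is bounded by the total
variation distance, i.e. `d_JS(P, Q)² = JSD(P, Q) ≤ dTV(P, Q)`. -/
theorem lin_lemma
    {Ω : Type*} [MeasurableSpace Ω]
    (P Q : Measure Ω) [IsProbabilityMeasure P] [IsProbabilityMeasure Q] :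
    JSD P Q ≤ dTV P Q ∧ dJS P Q ^ 2 ≤ dTV P Q := by
  have h_JSD : JSD P Q ≤ dTV P Q := by
    linarith [JSD_le_half_integral_abs_sub_toReal_rnDeriv P Q,
      integral_abs_sub_toReal_rnDeriv_le_two_mul_dTV P Q
        (absolutelyContinuous_inv_two_smul_add_left P Q)
        (absolutelyContinuous_inv_two_smul_add_right P Q)]
  refine ⟨h_JSD, ?_⟩
  rw [dJS, sq_sqrt']
  exact max_le h_JSD (dTV_nonneg P Q)
end
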